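/- Let V : ℕ → ℝ satisfy V 0 = 1, V 1 = n, V i = (n+m) V(i-1) - n V(i-2) with n ≥ 3, m ≥ 2 and φ = sqrt((m+n)^2 - 4n). Then for all i, ∑_{j=0}^{i} V j = (−n((m+n−φ)/2)^i + n((m+n+φ)/2)^i + φ) / φ. -/

import Mathlib

/-! With `a, b` the roots of `x² - (m + n) x + n`, so that `a + b = m + n`, `a b = n` and
`b - a = φ`, the recurrence reads `V (k+2) = (a + b) V (k+1) - a b V k`, whose solutions satisfy
`(b - a) V k = (b V 0 - V 1) aᵏ + (V 1 - a V 0) bᵏ`. For `V 0 = 1`, `V 1 = a b` the partial sums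
telescope to `(b - a) ∑_{j ≤ i} V j = a b (bⁱ - aⁱ) + (b - a)`, and `φ > 0` because
`(m + n)² - 4n = (m + n - 2)² + 4(m - 1)`. -/

section TwoStepRecurrence

variable {R : Type*} [CommRing R] {a b : R} {V : ℕ → R}

theorem sub_mul_eq_of_rec (hrec : ∀ k, V (k + 2) = (a + b) * V (k + 1) - a * b * V k) (k : ℕ) :
    (b - a) * V k = (b * V 0 - V 1) * a ^ k + (V 1 - a * V 0) * b ^ k := by
  induction k using Nat.twoStepInduction with
  | zero => ring
  | one => ring
  | more k ih₀ ih₁ =>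
    linear_combination (a + b) * ih₁ - a * b * ih₀ + (b - a) * hrec k

theorem sub_mul_sum_range_eq_of_rec (hrec : ∀ k, V (k + 2) = (a + b) * V (k + 1) - a * b * V k)
    (hV0 : V 0 = 1) (hV1 : V 1 = a * b) (i : ℕ) :
    (b - a) * ∑ j ∈ Finset.range (i + 1), V j = a * b * (b ^ i - a ^ i) + (b - a) := by
  induction i with
  | zero => simp [hV0]
  | succ i ih =>
    rw [Finset.sum_range_succ, mul_add, ih, sub_mul_eq_of_rec hrec, hV0, hV1]
    ring

end TwoStepRecurrence

theorem stmt_18_general (n m : ℝ) (hm : 2 ≤ m)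
    (V : ℕ → ℝ) (hV0 : V 0 = 1) (hV1 : V 1 = n)
    (hrec : ∀ i, 2 ≤ i → V i = (n + m) * V (i-1) - n * V (i-2)) :
    ∀ i, ∑ j ∈ Finset.range (i+1), V j =
      (-n * ((m + n - Real.sqrt ((m + n)^2 - 4*n))/2)^i
        + n * ((m + n + Real.sqrt ((m + n)^2 - 4*n))/2)^i
        + Real.sqrt ((m + n)^2 - 4*n)) / Real.sqrt ((m + n)^2 - 4*n) := by
  intro i
  have hdisc : 0 < (m + n) ^ 2 - 4 * n := by nlinarith [sq_nonneg (m + n - 2)]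
  set φ := Real.sqrt ((m + n) ^ 2 - 4 * n)
  have hφ : 0 < φ := Real.sqrt_pos.mpr hdisc
  have hφsq : φ ^ 2 = (m + n) ^ 2 - 4 * n := Real.sq_sqrt hdisc.le
  set a := (m + n - φ) / 2
  set b := (m + n + φ) / 2
  have hab : a * b = n := by linear_combination (-1 / 4 : ℝ) * hφsq
  have hba : b - a = φ := by ring
  have hrec' : ∀ k, V (k + 2) = (a + b) * V (k + 1) - a * b * V k := fun k => by
    rw [hab, show a + b = n + m by ring]
    exact hrec (k + 2) (by omega)
  have hsum := sub_mul_sum_range_eq_of_rec hrec' hV0 (hab ▸ hV1) i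
  rw [hab, hba] at hsum
  rw [eq_div_iff hφ.ne']
  linear_combination hsum

theorem stmt_18 (n m : ℝ) (hn : 3 ≤ n) (hm : 2 ≤ m)
    (V : ℕ → ℝ) (hV0 : V 0 = 1) (hV1 : V 1 = n)
    (hrec : ∀ i, 2 ≤ i → V i = (n + m) * V (i-1) - n * V (i-2)) :
    ∀ i, ∑ j ∈ Finset.range (i+1), V j =
      (-n * ((m + n - Real.sqrt ((m + n)^2 - 4*n))/2)^i
        + n * ((m + n + Real.sqrt ((m + n)^2 - 4*n))/2)^i
        + Real.sqrt ((m + n)^2 - 4*n)) / Real.sqrt ((m + n)^2 - 4*n) :=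
  stmt_18_general n m hm V hV0 hV1 hrec
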